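/- arXiv:2301.07633 — 8 statements merged into one kernel-verified Lean document; each statement's English description precedes it below -/
import Mathlib

section
/- If H is a subgroup of a finite group G, then the commuting probability of G is at most the commuting probability of H, i.e., Pr(G) ≤ Pr(H). -/
/-!
Count commuting pairs fibrewise over their first coordinate: the fibre over `x` is a centralizer
`C`, and `|C| ≤ [G : H] |C ⊓ H|`. Hence `G × G` has at most `[G : H]` times as many commuting
pairs as `G × H`, which by symmetry has at most `[G : H]` times as many as `H × H`. Dividing by
`|G|² = [G : H]² |H|²` gives the claim.
-/

namespace Subgroup

variable {G : Type*} [Group G]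

theorem card_le_index_mul_card_inf (H K : Subgroup G) [H.FiniteIndex] :
    Nat.card K ≤ H.index * Nat.card ↥(H ⊓ K) := by
  have hrel : H.relIndex K ≤ H.index := by
    simpa only [relIndex_top_right] using
      relIndex_le_of_le_right le_top
        (by simpa only [relIndex_top_right] using FiniteIndex.index_ne_zero)
  calc Nat.card K = H.relIndex K * Nat.card ((H ⊓ K).subgroupOf K) := by
        rw [inf_subgroupOf_right, mul_comm, relIndex, card_mul_index]
    _ ≤ H.index * Nat.card ↥(H ⊓ K) := by
        rw [Nat.card_congr (subgroupOfEquivOfLe inf_le_right).toEquiv]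
        gcongr

def CommutingPairs (A B : Subgroup G) : Type _ :=
  {p : A × B // Commute (p.1 : G) p.2}

def commutingPairsEquivSigma (A B : Subgroup G) :
    CommutingPairs A B ≃ Σ a : A, ↥(B ⊓ centralizer {(a : G)}) :=
  (Equiv.subtypeProdEquivSigmaSubtype fun (a : A) (b : B) => Commute (a : G) b).trans <|
    Equiv.sigmaCongrRight fun _ =>
      { toFun := fun b => ⟨b.1, b.1.2, mem_centralizer_singleton_iff.2 b.2.symm.eq⟩
        invFun := fun b =>
          ⟨⟨b, (mem_inf.1 b.2).1⟩, (mem_centralizer_singleton_iff.1 (mem_inf.1 b.2).2).symm⟩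
        left_inv := fun _ => rfl
        right_inv := fun _ => rfl }

theorem card_commutingPairs_comm (A B : Subgroup G) :
    Nat.card (CommutingPairs A B) = Nat.card (CommutingPairs B A) :=
  Nat.card_congr
    { toFun := fun p => ⟨p.1.swap, p.2.symm⟩
      invFun := fun p => ⟨p.1.swap, p.2.symm⟩
      left_inv := fun _ => rfl
      right_inv := fun _ => rfl }

theorem card_commutingPairs_le_index_mul [Finite G] (H A B : Subgroup G) :
    Nat.card (CommutingPairs A B) ≤ H.index * Nat.card (CommutingPairs A (H ⊓ B)) := by
  have := Fintype.ofFinite A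
  simp only [Nat.card_congr (commutingPairsEquivSigma _ _), Nat.card_sigma, Finset.mul_sum]
  gcongr with a
  rw [inf_assoc]
  exact card_le_index_mul_card_inf H _

theorem card_commutingPairs_top_top :
    Nat.card (CommutingPairs (⊤ : Subgroup G) ⊤) = Nat.card {p : G × G // Commute p.1 p.2} :=
  Nat.card_congr <| (topEquiv.toEquiv.prodCongr topEquiv.toEquiv).subtypeEquiv fun _ => Iff.rfl

theorem card_commutingPairs_self (H : Subgroup G) :
    Nat.card (CommutingPairs H H) = Nat.card {p : H × H // Commute p.1 p.2} :=
  Nat.card_congr <| Equiv.subtypeEquivRight fun _ => Submonoid.commute_coe_coe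

theorem card_commute_le_index_sq_mul [Finite G] (H : Subgroup G) :
    Nat.card {p : G × G // Commute p.1 p.2} ≤
      H.index ^ 2 * Nat.card {p : H × H // Commute p.1 p.2} := by
  rw [← card_commutingPairs_top_top, ← card_commutingPairs_self]
  calc Nat.card (CommutingPairs (⊤ : Subgroup G) ⊤)
      ≤ H.index * Nat.card (CommutingPairs ⊤ H) := by
        simpa only [inf_top_eq] using card_commutingPairs_le_index_mul H ⊤ ⊤
    _ = H.index * Nat.card (CommutingPairs H ⊤) := by rw [card_commutingPairs_comm]
    _ ≤ H.index * (H.index * Nat.card (CommutingPairs H H)) := by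
        gcongr
        simpa only [inf_top_eq] using card_commutingPairs_le_index_mul H H ⊤
    _ = H.index ^ 2 * Nat.card (CommutingPairs H H) := by ring

end Subgroup

theorem commProb_le_of_subgroup (G : Type*) [Group G] [Finite G] (H : Subgroup G) :
    commProb G ≤ commProb H := by
  have hpairs : (Nat.card {p : G × G // Commute p.1 p.2} : ℚ) ≤
      H.index ^ 2 * Nat.card {p : H × H // Commute p.1 p.2} := by
    exact_mod_cast H.card_commute_le_index_sq_mul
  have hi : (H.index : ℚ) ≠ 0 := Nat.cast_ne_zero.2 Subgroup.FiniteIndex.index_ne_zero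
  calc commProb G
      = Nat.card {p : G × G // Commute p.1 p.2} / ((H.index : ℚ) * Nat.card H) ^ 2 := by
        rw [commProb_def, ← H.index_mul_card, Nat.cast_mul]
    _ ≤ H.index ^ 2 * Nat.card {p : H × H // Commute p.1 p.2} /
          ((H.index : ℚ) * Nat.card H) ^ 2 := by
        gcongr
    _ = commProb H := by
        rw [commProb_def, mul_pow, mul_div_mul_left _ _ (pow_ne_zero 2 hi)]
end

section
/- If N is a normal subgroup of a finite group G, then Pr(G) ≤ Pr(N) · Pr(G/N). -/
/-!
Fix, for every `y : G` and every coset `q` of `N` that meets the centralizer of `y`, an element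
`commuteRep N y q` of `q` commuting with `y`. A commuting pair `(x, y)` is then recovered from
`m = (commuteRep N y x)⁻¹ * x` and `n = (commuteRep N m y)⁻¹ * y`, which form a commuting pair in
`N`, together with the commuting pair of cosets `(x N, y N)`: first `y = commuteRep N m (y N) * n`,
then `x = commuteRep N y (x N) * m`. Hence the number of commuting pairs of `G` is at most the
product of those of `N` and of `G ⧸ N`, and dividing by `|G|² = |N|² |G ⧸ N|²` gives the inequality.
-/

namespace Subgroup

variable {G : Type*} [Group G]

noncomputable def commuteRep (N : Subgroup G) (y : G) (q : G ⧸ N) : G :=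
  Classical.epsilon fun z : G => Commute z y ∧ (z : G ⧸ N) = q

variable {N : Subgroup G} {x y : G}

theorem commute_commuteRep (h : Commute x y) : Commute (N.commuteRep y x) y :=
  (Classical.epsilon_spec (p := fun z : G => Commute z y ∧ (z : G ⧸ N) = x) ⟨x, h, rfl⟩).1

theorem inv_commuteRep_mul_mem (h : Commute x y) : (N.commuteRep y x)⁻¹ * x ∈ N :=
  QuotientGroup.eq.mp
    (Classical.epsilon_spec (p := fun z : G => Commute z y ∧ (z : G ⧸ N) = x) ⟨x, h, rfl⟩).2

theorem commute_inv_commuteRep_mul (h : Commute x y) : Commute ((N.commuteRep y x)⁻¹ * x) y :=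
  (commute_commuteRep h).inv_left.mul_left h

variable (N) [N.Normal]

noncomputable def decodeCommutePair
    (p : {p : N × N // Commute p.1 p.2} × {p : (G ⧸ N) × (G ⧸ N) // Commute p.1 p.2}) : G × G :=
  let y := N.commuteRep p.1.1.1 p.2.1.2 * p.1.1.2
  (N.commuteRep y p.2.1.1 * p.1.1.1, y)

theorem commute_subset_range_decodeCommutePair :
    {p : G × G | Commute p.1 p.2} ⊆ Set.range N.decodeCommutePair := by
  rintro ⟨x, y⟩ (hxy : Commute x y)
  set m := (N.commuteRep y x)⁻¹ * x
  have hmy : Commute m y := commute_inv_commuteRep_mul hxy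
  set n := (N.commuteRep m y)⁻¹ * y
  have hmn : Commute m n := (commute_inv_commuteRep_mul hmy.symm).symm
  refine ⟨(⟨(⟨m, inv_commuteRep_mul_mem hxy⟩, ⟨n, inv_commuteRep_mul_mem hmy.symm⟩),
    Subtype.ext hmn⟩, ⟨((x : G ⧸ N), (y : G ⧸ N)), congrArg _ hxy⟩), ?_⟩
  simp only [decodeCommutePair, n, mul_inv_cancel_left, m]

theorem card_commute_le_mul_quotient [Finite G] :
    Nat.card {p : G × G // Commute p.1 p.2} ≤
      Nat.card {p : N × N // Commute p.1 p.2} *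
        Nat.card {p : (G ⧸ N) × (G ⧸ N) // Commute p.1 p.2} :=
  calc Nat.card {p : G × G | Commute p.1 p.2}
      ≤ Nat.card (Set.range N.decodeCommutePair) :=
        Nat.card_mono (Set.finite_range _) (commute_subset_range_decodeCommutePair N)
    _ ≤ _ := (Finite.card_range_le _).trans_eq (Nat.card_prod _ _)

end Subgroup

theorem commProb_le_mul_quotient (G : Type*) [Group G] [Finite G] (N : Subgroup G) [N.Normal] :
    commProb G ≤ commProb N * commProb (G ⧸ N) := by
  rw [commProb_def, commProb_def, commProb_def, div_mul_div_comm, ← mul_pow,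
    N.card_eq_card_quotient_mul_card_subgroup, mul_comm (Nat.card (G ⧸ N))]
  push_cast
  gcongr
  exact_mod_cast N.card_commute_le_mul_quotient
end

section
/- If p is the smallest prime dividing |G| and Pr(G) > (p² + p − 1)/p³, then G is abelian. -/
theorem abelian_of_commProb_gt (G : Type*) [Group G] [Finite G] (p : ℕ) (hp : p.Prime)
    (hdvd : p ∣ Nat.card G) (hmin : ∀ q : ℕ, q.Prime → q ∣ Nat.card G → p ≤ q)
    (h : ((p : ℚ) ^ 2 + p - 1) / (p : ℚ) ^ 3 < commProb G) :
    ∀ a b : G, a * b = b * a := by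
  classical
  by_contra hab
  push_neg at hab
  obtain ⟨a, b, hab⟩ := hab
  cases nonempty_fintype G
  set n := Nat.card G with hn
  set z := Nat.card (Subgroup.center G) with hz
  set k := Nat.card (ConjClasses G) with hk
  have hn0 : 0 < n := Nat.card_pos
  -- center is proper
  have hZtop : Subgroup.center G ≠ ⊤ := by
    intro hZ
    exact hab ((Subgroup.mem_center_iff.mp (hZ ▸ Subgroup.mem_top b)) a)
  -- index facts
  set i := (Subgroup.center G).index with hi
  have hidvd : i ∣ n := Subgroup.index_dvd_card _
  have hi1 : i ≠ 1 := fun h1 => hZtop (Subgroup.index_eq_one.mp h1)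
  have hinp : ¬ i.Prime := by
    intro hip
    haveI : Fact i.Prime := ⟨hip⟩
    haveI : IsCyclic (G ⧸ Subgroup.center G) := isCyclic_of_prime_card (p := i) rfl
    exact hab (commutative_of_cyclic_center_quotient (QuotientGroup.mk' (Subgroup.center G))
      (le_of_eq (QuotientGroup.ker_mk' _)) a b)
  have hpp : p * p ≤ i := by
    have hq := Nat.minFac_prime hi1
    have hqd : i.minFac ∣ i := Nat.minFac_dvd i
    have hpq : p ≤ i.minFac := hmin _ hq (hqd.trans hidvd)
    set r := i / i.minFac with hr
    have hqr : i.minFac * r = i := Nat.mul_div_cancel' hqd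
    have hr1 : r ≠ 1 := by
      intro h1
      rw [h1, mul_one] at hqr
      exact hinp (hqr ▸ hq)
    have hi0 : i ≠ 0 := fun h0 => hn0.ne' (Nat.eq_zero_of_zero_dvd (h0 ▸ hidvd))
    have hr0 : r ≠ 0 := by
      intro h0
      rw [h0, mul_zero] at hqr
      exact hi0 hqr.symm
    have hrd : r ∣ n := (Dvd.intro_left _ hqr).trans hidvd
    have hpr : p ≤ r := le_trans (hmin _ (Nat.minFac_prime hr1) ((Nat.minFac_dvd r).trans hrd))
      (Nat.minFac_le (Nat.pos_of_ne_zero hr0))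
    calc p * p ≤ i.minFac * r := Nat.mul_le_mul hpq hpr
    _ = i := hqr
  have hzn : p * p * z ≤ n := by
    have := Subgroup.card_mul_index (Subgroup.center G)
    calc p * p * z ≤ i * z := Nat.mul_le_mul_right z hpp
    _ = n := by rw [mul_comm]; exact this
  -- each noncentral class has size ≥ p
  have hclass_ge : ∀ x : ConjClasses G, x ∈ ConjClasses.noncenter G → p ≤ Nat.card x.carrier := by
    intro x hx
    obtain ⟨g, rfl⟩ := x.exists_rep
    have hdvd' : Nat.card (ConjClasses.mk g).carrier ∣ n := by
      have horb := MulAction.card_orbit_mul_card_stabilizer_eq_card_group (ConjAct G) g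
      have hset : MulAction.orbit (ConjAct G) g = (ConjClasses.mk g).carrier :=
        ConjAct.orbit_eq_carrier_conjClasses g
      have : Nat.card (ConjClasses.mk g).carrier ∣ Nat.card (ConjAct G) := by
        rw [← hset]
        simp only [Nat.card_eq_fintype_card]
        exact ⟨_, horb.symm⟩
      simpa [hn, Nat.card_eq_fintype_card] using this
    have hnt : (ConjClasses.mk g).carrier.Nontrivial := ConjClasses.mem_noncenter _ |>.mp hx
    have h2 : 1 < Nat.card (ConjClasses.mk g).carrier := by
      rw [Nat.card_coe_set_eq]
      rw [Set.one_lt_ncard (Set.toFinite _)]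
      obtain ⟨x, hx, y, hy, hxy⟩ := hnt
      exact ⟨x, hx, y, hy, hxy⟩
    set c := Nat.card (ConjClasses.mk g).carrier with hc
    calc p ≤ c.minFac := hmin _ (Nat.minFac_prime (by omega)) ((Nat.minFac_dvd c).trans hdvd')
    _ ≤ c := Nat.minFac_le (by omega)
  -- class equation
  have hceq := Group.nat_card_center_add_sum_card_noncenter_eq_card G
  set S := ∑ᶠ x ∈ ConjClasses.noncenter G, Nat.card x.carrier with hS
  -- number of classes
  have hfin : (ConjClasses.noncenter G).Finite := Set.toFinite _
  set m := (ConjClasses.noncenter G).ncard with hm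
  have hkzm : k = m + z := by
    rw [hk, ← Set.ncard_add_ncard_compl (ConjClasses.noncenter G)]
    congr 1
    rw [← Nat.card_coe_set_eq]
    exact (Nat.card_congr ((ConjClasses.mk_bijOn G).equiv _)).symm
  have hSm : p * m ≤ S := by
    rw [hS, finsum_mem_eq_finite_toFinset_sum _ hfin]
    have h1 := Finset.card_nsmul_le_sum hfin.toFinset (fun x => Nat.card x.carrier) p
      (fun x hx => hclass_ge x (hfin.mem_toFinset.mp hx))
    rw [smul_eq_mul] at h1
    calc p * m = hfin.toFinset.card * p := by
          rw [hm, Set.ncard_eq_toFinset_card _ hfin, mul_comm]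
    _ ≤ _ := h1
  -- transfer to ℚ and derive a contradiction
  have hp0 : (0:ℚ) < p := by exact_mod_cast hp.pos
  have hq1 : (p:ℚ) * k ≤ (S:ℚ) + p * z := by
    have hnat : p * k ≤ S + p * z := by
      rw [hkzm, Nat.mul_add]
      exact Nat.add_le_add_right hSm _
    exact_mod_cast hnat
  have hq2 : (z:ℚ) + S = n := by exact_mod_cast hceq
  have hq3 : (p:ℚ) * p * z ≤ n := by exact_mod_cast hzn
  have hq4 : (2:ℚ) ≤ p := by exact_mod_cast hp.two_le
  have hcp : commProb G = (k : ℚ) / n := commProb_def' G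
  rw [hcp, div_lt_div_iff₀ (pow_pos hp0 3) (by exact_mod_cast hn0)] at h
  have A : (p:ℚ)^2 * (p * k) ≤ (p:ℚ)^2 * ((S:ℚ) + p * z) :=
    mul_le_mul_of_nonneg_left hq1 (by positivity)
  have B : ((p:ℚ) - 1) * ((p:ℚ) * p * z) ≤ ((p:ℚ) - 1) * n :=
    mul_le_mul_of_nonneg_left hq3 (by linarith)
  have C : (p:ℚ)^2 * ((z:ℚ) + S) = (p:ℚ)^2 * n := by rw [hq2]
  nlinarith [A, B, C, h]
end

section
/- If p is the smallest prime dividing the order of a finite group G and Pr(G) > 1/p, then G is nilpotent. -/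
/-!
Induction on `|G|`. The hypotheses pass to `G ⧸ center G`: the commuting probability can only grow
under quotients, and the prime divisors of `|G ⧸ center G|` divide `|G|`. So it suffices to show
that the centre is nontrivial.

Suppose `Z(G) = 1`, let `p` be the least prime divisor of `|G|` and `1 ≠ y ∈ [G, G]`. A class of
size `p` has a centraliser of index `p`, which is normal with cyclic quotient and hence contains
`[G, G]`; so all classes of size `p` lie in `C(y)`, whose index is at least `p`. Every other
nontrivial class has size at least `p + 1`, and comparing with `k(G) > |G| / p` forces `|G| < p²`.
Then `|G| = p` and `G` is abelian, a contradiction.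
-/

open Subgroup

theorem commProb_le_commProb_quotient {G : Type*} [Group G] [Finite G] (N : Subgroup G)
    [N.Normal] : commProb G ≤ commProb (G ⧸ N) := by
  have hpairs : Nat.card {q : G × G // Commute q.1 q.2} ≤
      Nat.card ({q : (G ⧸ N) × (G ⧸ N) // Commute q.1 q.2} × N × N) := by
    let e := groupEquivQuotientProdSubgroup (s := N)
    refine Nat.card_le_card_of_injective (fun q ↦ (⟨((e q.1.1).1, (e q.1.2).1),
      q.2.map (QuotientGroup.mk' N)⟩, (e q.1.1).2, (e q.1.2).2)) ?_
    rintro ⟨⟨x₁, x₂⟩, _⟩ ⟨⟨y₁, y₂⟩, _⟩ hxy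
    simp only [Prod.mk.injEq, Subtype.ext_iff] at hxy
    have h₁ : x₁ = y₁ := e.injective (Prod.ext hxy.1.1 (Subtype.ext hxy.2.1))
    have h₂ : x₂ = y₂ := e.injective (Prod.ext hxy.1.2 (Subtype.ext hxy.2.2))
    simp only [h₁, h₂]
  rw [Nat.card_prod, Nat.card_prod] at hpairs
  have hG : (0 : ℚ) < Nat.card G := mod_cast Nat.card_pos
  have hQ : (0 : ℚ) < Nat.card (G ⧸ N) := mod_cast Nat.card_pos
  rw [commProb_def, commProb_def, div_le_div_iff₀ (by positivity) (by positivity),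
    N.card_eq_card_quotient_mul_card_subgroup]
  calc (Nat.card {q : G × G // Commute q.1 q.2} : ℚ) * Nat.card (G ⧸ N) ^ 2
      ≤ Nat.card {q : (G ⧸ N) × (G ⧸ N) // Commute q.1 q.2} * (Nat.card N * Nat.card N) *
          Nat.card (G ⧸ N) ^ 2 := by gcongr; exact_mod_cast hpairs
    _ = _ := by push_cast; ring

section

variable {G : Type*} [Group G]

theorem ConjClasses.ncard_carrier_mk (x : G) :
    (ConjClasses.mk x).carrier.ncard = (centralizer {x}).index := by
  rw [centralizer_eq_comap_stabilizer, ← ConjAct.orbit_eq_carrier_conjClasses,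
    ← MulAction.index_stabilizer]
  exact (index_comap_of_surjective _ ConjAct.toConjAct.surjective).symm

theorem ConjClasses.ncard_carrier_mk_eq_one_iff {x : G} :
    (ConjClasses.mk x).carrier.ncard = 1 ↔ x ∈ center G := by
  rw [ncard_carrier_mk, index_eq_one, centralizer_eq_top_iff_subset, Set.singleton_subset_iff,
    SetLike.mem_coe]

theorem ConjClasses.ncard_carrier_mk_dvd_card [Finite G] (x : G) :
    (ConjClasses.mk x).carrier.ncard ∣ Nat.card G :=
  ncard_carrier_mk x ▸ index_dvd_card _

theorem ConjClasses.minFac_card_le_ncard_carrier [Finite G] {x : G} (hx : x ∉ center G) :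
    (Nat.card G).minFac ≤ (ConjClasses.mk x).carrier.ncard := by
  refine Nat.minFac_le_of_dvd ?_ (ncard_carrier_mk_dvd_card x)
  have h0 : (ConjClasses.mk x).carrier.ncard ≠ 0 := ncard_carrier_mk x ▸ index_ne_zero_of_finite
  have h1 : (ConjClasses.mk x).carrier.ncard ≠ 1 := ncard_carrier_mk_eq_one_iff.not.mpr hx
  omega

theorem commutator_le_of_index_prime {H : Subgroup G} [H.Normal] (hH : H.index.Prime) :
    commutator G ≤ H := by
  have : Fact H.index.Prime := ⟨hH⟩
  have : IsCyclic (G ⧸ H) := isCyclic_of_prime_card H.index_eq_card.symm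
  exact Normal.quotient_commutative_iff_commutator_le.mp inferInstance

theorem commute_of_ncard_carrier_mk_eq_minFac [Finite G] {x y : G}
    (hx : (ConjClasses.mk x).carrier.ncard = (Nat.card G).minFac) (hy : y ∈ commutator G) :
    Commute x y := by
  rw [ConjClasses.ncard_carrier_mk] at hx
  have : (centralizer {x}).Normal := normal_of_index_eq_minFac_card hx
  have hle : commutator G ≤ centralizer {x} := by
    rcases eq_or_ne (Nat.card G) 1 with h1 | h1
    · rw [h1, Nat.minFac_one, index_eq_one] at hx
      exact hx ▸ le_top
    · exact commutator_le_of_index_prime (hx ▸ Nat.minFac_prime h1)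
  exact (mem_centralizer_singleton_iff.mp (hle hy)).symm

theorem ConjClasses.card_ncard_carrier_mk_eq_mul_card [Finite G] (m : ℕ) :
    Nat.card {x : G // (ConjClasses.mk x).carrier.ncard = m} =
      m * Nat.card {c : ConjClasses G // c.carrier.ncard = m} := by
  have e : {x : G // (ConjClasses.mk x).carrier.ncard = m} ≃
      Σ c : {c : ConjClasses G // c.carrier.ncard = m}, c.1.carrier :=
    { toFun x := ⟨⟨_, x.2⟩, x.1, ConjClasses.mem_carrier_mk⟩
      invFun c := ⟨c.2, by rw [ConjClasses.mem_carrier_iff_mk_eq.mp c.2.2]; exact c.1.2⟩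
      left_inv _ := rfl
      right_inv := by
        rintro ⟨⟨c, hc⟩, x, hx⟩
        obtain rfl := ConjClasses.mem_carrier_iff_mk_eq.mp hx
        rfl }
  have : Fintype {c : ConjClasses G // c.carrier.ncard = m} := Fintype.ofFinite _
  rw [Nat.card_congr e, Nat.card_sigma, Nat.card_eq_fintype_card (α := {c : ConjClasses G // _}),
    mul_comm, ← smul_eq_mul, ← Finset.card_univ, ← Finset.sum_const]
  exact Finset.sum_congr rfl fun c _ ↦ (Nat.card_coe_set_eq _).trans c.2

theorem minFac_mul_card_ncard_carrier_eq_minFac_le [Finite G] {y : G} (hy : y ∈ commutator G)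
    (hyZ : y ∉ center G) :
    (Nat.card G).minFac *
        Nat.card {x : G // (ConjClasses.mk x).carrier.ncard = (Nat.card G).minFac} ≤
      Nat.card G := by
  have hcard : Nat.card {x : G // (ConjClasses.mk x).carrier.ncard = (Nat.card G).minFac} ≤
      Nat.card (centralizer {y}) :=
    Nat.card_le_card_of_injective
      (fun x ↦ ⟨x.1, mem_centralizer_singleton_iff.mpr
        (commute_of_ncard_carrier_mk_eq_minFac x.2 hy)⟩)
      fun _ _ h ↦ Subtype.ext (congrArg (fun z : centralizer {y} ↦ (z : G)) h)
  calc _ ≤ (centralizer {y}).index * Nat.card (centralizer {y}) := by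
        gcongr
        exact ConjClasses.ncard_carrier_mk y ▸ ConjClasses.minFac_card_le_ncard_carrier hyZ
    _ = Nat.card G := index_mul_card _

theorem card_conjClasses_mul_le_of_center_eq_bot [Finite G] (hZ : center G = ⊥) :
    ((Nat.card G).minFac + 1) * Nat.card (ConjClasses G) ≤ Nat.card G +
      Nat.card {c : ConjClasses G // c.carrier.ncard = (Nat.card G).minFac} +
        (Nat.card G).minFac := by
  classical
  cases nonempty_fintype G
  set p := (Nat.card G).minFac
  set s : ConjClasses G → ℕ := fun c ↦ c.carrier.ncard
  have hsum : ∑ c, s c = Nat.card G := by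
    rw [← finsum_eq_sum_of_fintype]
    exact Group.sum_card_conj_classes_eq_card G
  have hclass : ∀ c, p + 1 ≤ s c + (if s c = p then 1 else 0) +
      (if c = ConjClasses.mk 1 then p else 0) := by
    intro c
    obtain ⟨x, rfl⟩ := ConjClasses.mk_surjective c
    rcases eq_or_ne x 1 with rfl | hx
    · have : s (ConjClasses.mk 1) = 1 :=
        ConjClasses.ncard_carrier_mk_eq_one_iff.mpr (one_mem _)
      simp only [this, if_true]
      omega
    · have hxZ : x ∉ center G := by rwa [hZ, mem_bot]
      have : p ≤ s (ConjClasses.mk x) := ConjClasses.minFac_card_le_ncard_carrier hxZ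
      have : ConjClasses.mk x ≠ ConjClasses.mk 1 := by
        rwa [Ne, ConjClasses.mk_eq_mk_iff_isConj, isConj_one_left]
      simp only [this, if_false]
      split_ifs <;> omega
  calc (p + 1) * Nat.card (ConjClasses G) = ∑ _c : ConjClasses G, (p + 1) := by
        simp [Nat.card_eq_fintype_card, mul_comm]
    _ ≤ ∑ c, (s c + (if s c = p then 1 else 0) + (if c = ConjClasses.mk 1 then p else 0)) :=
        Finset.sum_le_sum fun c _ ↦ hclass c
    _ = _ := by
        rw [Finset.sum_add_distrib, Finset.sum_add_distrib, hsum, Finset.sum_boole,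
          Finset.sum_ite_eq', if_pos (Finset.mem_univ _), Nat.cast_id,
          Nat.card_eq_fintype_card (α := {c : ConjClasses G // _}), Fintype.card_subtype]

theorem exists_mem_commutator_ne_one_of_center_eq_bot [Nontrivial G] (hZ : center G = ⊥) :
    ∃ y ∈ commutator G, y ≠ 1 := by
  have : commutator G ≠ ⊥ := by
    rw [Ne, commutator_eq_bot_iff_center_eq_top, hZ]
    exact bot_ne_top
  simpa using (ne_bot_iff_exists_ne_one.mp this)

theorem card_lt_minFac_sq_of_center_eq_bot [Finite G] [Nontrivial G] (hZ : center G = ⊥)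
    (h : 1 / ((Nat.card G).minFac : ℚ) < commProb G) :
    Nat.card G < (Nat.card G).minFac ^ 2 := by
  set n := Nat.card G
  set p := n.minFac
  have hp : 2 ≤ p := (Nat.minFac_prime Finite.one_lt_card.ne').two_le
  obtain ⟨y, hy, hy1⟩ := exists_mem_commutator_ne_one_of_center_eq_bot hZ
  have hyZ : y ∉ center G := by rwa [hZ, mem_bot]
  have hk : n < p * Nat.card (ConjClasses G) := by
    rw [commProb_def', div_lt_div_iff₀ (by positivity) (mod_cast Nat.card_pos)] at h
    exact_mod_cast (by linarith : (n : ℚ) < p * Nat.card (ConjClasses G))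
  have hclasses := card_conjClasses_mul_le_of_center_eq_bot hZ
  have hsmall := minFac_mul_card_ncard_carrier_eq_minFac_le hy hyZ
  rw [ConjClasses.card_ncard_carrier_mk_eq_mul_card] at hsmall
  -- With `B` classes of size `p`: `(p + 1) (n + 1) ≤ p (n + B + p)` and `p² B ≤ n`
  -- give `(p - 1) n < (p - 1) p²`.
  nlinarith

theorem center_ne_bot_of_one_div_minFac_lt_commProb [Finite G] [Nontrivial G]
    (h : 1 / ((Nat.card G).minFac : ℚ) < commProb G) : center G ≠ ⊥ := by
  intro hZ
  have hprime : (Nat.card G).Prime := by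
    by_contra hnp
    have := Nat.minFac_sq_le_self Nat.card_pos hnp
    have := card_lt_minFac_sq_of_center_eq_bot hZ h
    omega
  have : Fact (Nat.card G).Prime := ⟨hprime⟩
  have : IsCyclic G := isCyclic_of_prime_card rfl
  exact bot_ne_top (hZ.symm.trans center_eq_top)

end

theorem nilpotent_of_commProb_gt_general (G : Type*) [Group G] [Finite G] (p : ℕ) (hp : p.Prime)
    (hmin : ∀ q : ℕ, q.Prime → q ∣ Nat.card G → p ≤ q)
    (h : 1 / (p : ℚ) < commProb G) : Group.IsNilpotent G := by
  induction hn : Nat.card G using Nat.strong_induction_on generalizing G with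
  | _ n ih =>
  rcases subsingleton_or_nontrivial G with hG | hG
  · infer_instance
  have hpmin : p ≤ (Nat.card G).minFac :=
    (Nat.le_minFac.mpr hmin).resolve_left Finite.one_lt_card.ne'
  have hZ : center G ≠ ⊥ := center_ne_bot_of_one_div_minFac_lt_commProb <|
    lt_of_le_of_lt (one_div_le_one_div_of_le (mod_cast hp.pos) (mod_cast hpmin)) h
  have hlt : Nat.card (G ⧸ center G) < n := by
    rw [← hn, (center G).card_eq_card_quotient_mul_card_subgroup]
    exact lt_mul_of_one_lt_right Nat.card_pos ((center G).one_lt_card_iff_ne_bot.mpr hZ)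
  refine Group.of_quotient_center_nilpotent <| ih _ hlt (G ⧸ center G)
    (fun q hq hdvd ↦ hmin q hq (hdvd.trans (card_quotient_dvd_card _)))
    (h.trans_le (commProb_le_commProb_quotient _)) rfl

theorem nilpotent_of_commProb_gt (G : Type*) [Group G] [Finite G] (p : ℕ) (hp : p.Prime)
    (hdvd : p ∣ Nat.card G) (hmin : ∀ q : ℕ, q.Prime → q ∣ Nat.card G → p ≤ q)
    (h : 1 / (p : ℚ) < commProb G) : Group.IsNilpotent G :=
  nilpotent_of_commProb_gt_general G p hp hmin h
end

section
/- Let G be a finite group of odd order, let A ≤ G be a normal abelian subgroup, and let r be the number of orbits of the conjugation action of G on Irr(A) \ {1_A}. Then r is even. -/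
/-!
By Schur's lemma the irreducible characters of the abelian group `A` are its linear characters,
so `θ ↦ θ ∘ inv` is an involution of `Irr(A) \ {1_A}` commuting with the action of `G`, and it
descends to an involution of the set of orbits. It has no fixed orbit: if `θ ∘ inv = g • θ`, then
`g²` fixes `θ`, hence so does `g`, which has odd order and is thus a power of `g²`; so `θ` is
real, i.e. `θ(a)² = 1` for all `a`, and `θ = 1` because every element of `A` is a square. An
involution without fixed points has an even number of points.
-/

/-- The set of irreducible complex characters of `G`. -/
noncomputable def Irr (G : Type) [Group G] : Set (G → ℂ) :=
  {χ | ∃ V : FDRep ℂ G, CategoryTheory.Simple V ∧ V.character = χ}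

/-- The average character degree of `G`. -/
noncomputable def acd (G : Type) [Group G] : ℝ :=
  (∑ᶠ χ ∈ Irr G, (χ 1).re) / (Nat.card (Irr G) : ℝ)

/-- The conjugation relation on characters of a normal subgroup A. -/
def conjRel {G : Type} [Group G] (A : Subgroup G) (hA : A.Normal)
    (θ₁ θ₂ : A → ℂ) : Prop :=
  ∃ g : G, ∀ a : A, θ₂ a = θ₁ ⟨g * a * g⁻¹, hA.conj_mem a a.2 g⟩

open CategoryTheory Module Function

theorem Function.Involutive.even_natCard {α : Type*} {f : α → α} (hf : Involutive f)
    (hfix : ∀ x, f x ≠ x) : Even (Nat.card α) := by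
  classical
  cases finite_or_infinite α with
  | inr _ => simp
  | inl _ =>
    have := Fintype.ofFinite α
    have := Fact.mk Nat.prime_two
    have hmod := Equiv.Perm.card_fixedPoints_modEq (f := f) (p := 2) (n := 1) (funext hf)
    have hempty : Fintype.card (fixedPoints f) = 0 :=
      Fintype.card_eq_zero_iff.mpr ⟨fun x => hfix x.1 x.2⟩
    rw [hempty, Nat.modEq_zero_iff_dvd] at hmod
    rw [Nat.card_eq_fintype_card]
    exact even_iff_two_dvd.mpr hmod

theorem Function.Involutive.even_natCard_quot {α : Type*} {r : α → α → Prop}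
    (hr : Equivalence r) {f : α → α} (hf : Involutive f) (hfr : ∀ x y, r x y → r (f x) (f y))
    (hfix : ∀ x, ¬ r (f x) x) : Even (Nat.card (Quot r)) := by
  refine Involutive.even_natCard (f := Quot.map f hfr) ?_ ?_
  · rintro ⟨x⟩
    exact congrArg (Quot.mk r) (hf x)
  · rintro ⟨x⟩ h
    exact hfix x (hr.eqvGen_iff.mp (Quot.eqvGen_exact h))

theorem Function.Involutive.eq_self_of_smul_eq {G α : Type*} [Group G] [MulAction G α]
    {f : α → α} (hf : Involutive f) {g : G} (hg : Odd (orderOf g))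
    (hfg : ∀ x, f (g • x) = g • f x) {x : α} (hx : g • x = f x) : f x = x := by
  have hsq : g ^ 2 ∈ MulAction.stabilizer G x := by
    rw [MulAction.mem_stabilizer_iff, sq, mul_smul, hx, ← hfg, hx, hf]
  have hg : g ∈ MulAction.stabilizer G x :=
    Subgroup.zpowers_le.mpr hsq (mem_zpowers_pow_iff.mpr (Nat.coprime_two_left.mpr hg))
  rw [← hx, hg]

theorem MonoidHom.eq_one_of_map_inv {H M : Type*} [Group H] [Monoid M] (hH : Odd (Nat.card H))
    (χ : H →* M) (hχ : ∀ a, χ a⁻¹ = χ a) : χ = 1 := by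
  ext a
  obtain ⟨b, rfl⟩ := (powCoprime (Nat.coprime_two_right.mpr hH)).surjective a
  calc χ (b ^ 2) = χ b * χ b⁻¹ := by rw [hχ, sq, map_mul]
    _ = 1 := by rw [← map_mul, mul_inv_cancel, map_one]

namespace FDRep

universe u
variable {k H : Type u} [Field k] [IsAlgClosed k] [Group H] [IsMulCommutative H]

theorem exists_ρ_eq_smul_id (V : FDRep k H) [Simple V] (a : H) :
    ∃ c : k, V.ρ a = c • LinearMap.id := by
  let ρa : V ⟶ V :=
    { hom := FGModuleCat.ofHom (V.ρ a)
      comm := fun g => by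
        ext x
        change (V.ρ a * V.ρ g) x = (V.ρ g * V.ρ a) x
        rw [← map_mul, ← map_mul, mul_comm' a g] }
  obtain ⟨c, hc⟩ := endomorphism_simple_eq_smul_id k ρa
  exact ⟨c, (congrArg (fun φ => φ.hom.hom.hom) hc).symm⟩

theorem character_mul_character (V : FDRep k H) [Simple V] (a b : H) :
    V.character a * V.character b = finrank k V * V.character (a * b) := by
  obtain ⟨c, hc⟩ := exists_ρ_eq_smul_id V a
  obtain ⟨d, hd⟩ := exists_ρ_eq_smul_id V b
  simp only [character, map_mul, hc, hd, smul_mul_smul, map_smul, smul_eq_mul,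
    ← Module.End.one_eq_id, one_mul, LinearMap.trace_one]
  ring

/-- By Schur, `χ(a) χ(a⁻¹) = (dim V)²` for every `a`, while the character of a simple `V` has norm
`∑ χ(a) χ(a⁻¹) = |H|`. -/
theorem finrank_eq_one_of_simple [CharZero k] [Fintype H] (V : FDRep k H) [Simple V] :
    finrank k V = 1 := by
  have hnorm := (simple_iff_char_is_norm_one V).mp ‹_›
  simp only [character_mul_character, mul_inv_cancel, char_one, Finset.sum_const,
    Finset.card_univ, nsmul_eq_mul, Nat.card_eq_fintype_card] at hnorm
  have hsq : ((finrank k V * finrank k V : ℕ) : k) = 1 := by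
    have hcard : (Fintype.card H : k) ≠ 0 := Nat.cast_ne_zero.mpr Fintype.card_ne_zero
    push_cast
    exact mul_right_cancel₀ hcard (by linear_combination hnorm)
  exact Nat.eq_one_of_mul_eq_one_right (by exact_mod_cast hsq)

end FDRep

section Irr

variable {H : Type} [Group H] [Finite H]

theorem exists_monoidHom_of_mem_Irr [IsMulCommutative H] {θ : H → ℂ} (hθ : θ ∈ Irr H) :
    ∃ χ : H →* ℂ, ⇑χ = θ := by
  obtain ⟨V, hV, rfl⟩ := hθ
  have := Fintype.ofFinite H
  have hdim := FDRep.finrank_eq_one_of_simple V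
  refine ⟨{ toFun := V.character, map_one' := ?_, map_mul' := fun a b => ?_ }, rfl⟩
  · simp [FDRep.char_one, hdim]
  · simp [FDRep.character_mul_character, hdim]

theorem coe_mem_Irr (χ : H →* ℂ) : ⇑χ ∈ Irr H := by
  have := Fintype.ofFinite H
  let V := FDRep.of ((Algebra.lsmul ℂ ℂ ℂ).toMonoidHom.comp χ)
  have hV : V.character = χ := by
    ext a
    change LinearMap.trace ℂ ℂ (χ a • LinearMap.id) = χ a
    simp
  refine ⟨V, (FDRep.simple_iff_char_is_norm_one V).mpr ?_, hV⟩
  simp only [hV, ← map_mul, mul_inv_cancel, map_one, Finset.sum_const, Finset.card_univ,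
    nsmul_eq_mul, mul_one, Nat.card_eq_fintype_card]

theorem comp_inv_mem_Irr [IsMulCommutative H] {θ : H → ℂ} (hθ : θ ∈ Irr H) :
    θ ∘ Inv.inv ∈ Irr H := by
  obtain ⟨χ, rfl⟩ := exists_monoidHom_of_mem_Irr hθ
  exact coe_mem_Irr
    { toFun := fun a => χ a⁻¹
      map_one' := by simp
      map_mul' := fun a b => by simp [mul_comm] }

theorem eq_one_of_mem_Irr_of_comp_inv_eq [IsMulCommutative H] (hH : Odd (Nat.card H))
    {θ : H → ℂ} (hθ : θ ∈ Irr H) (hinv : θ ∘ Inv.inv = θ) : θ = fun _ => 1 := by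
  obtain ⟨χ, rfl⟩ := exists_monoidHom_of_mem_Irr hθ
  rw [χ.eq_one_of_map_inv hH (congrFun hinv)]
  rfl

end Irr

section ConjAction

attribute [local instance] arrowAction

theorem comp_inv_smul {G M β : Type*} [Group G] [Group M] [MulDistribMulAction G M]
    (c : G) (θ : M → β) : (c • θ) ∘ Inv.inv = c • (θ ∘ Inv.inv) :=
  funext fun a => congrArg θ (smul_inv' c⁻¹ a)

variable {G : Type} [Group G] {A : Subgroup G} (hA : A.Normal)

theorem conjRel_iff_orbitRel (θ₁ θ₂ : A → ℂ) :
    conjRel A hA θ₁ θ₂ ↔ MulAction.orbitRel (ConjAct G) (A → ℂ) θ₁ θ₂ := by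
  rw [MulAction.orbitRel_apply, MulAction.mem_orbit_iff]
  constructor
  · rintro ⟨g, hg⟩
    refine ⟨ConjAct.toConjAct g, funext fun a => ?_⟩
    change θ₂ ((ConjAct.toConjAct g)⁻¹ • a) = θ₁ a
    rw [hg]
    congr 1
    ext
    simp [ConjAct.Subgroup.val_conj_smul, ConjAct.smul_def, mul_assoc]
  · rintro ⟨c, rfl⟩
    refine ⟨ConjAct.ofConjAct c, fun a => ?_⟩
    change θ₂ a = θ₂ (c⁻¹ • _)
    congr 1
    ext
    simp [ConjAct.Subgroup.val_conj_smul, ConjAct.smul_def, mul_assoc]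

theorem conjRel_equivalence : Equivalence (conjRel A hA) := by
  refine ⟨fun θ => ?_, fun h => ?_, fun h₁ h₂ => ?_⟩ <;> simp only [conjRel_iff_orbitRel] at *
  exacts [(MulAction.orbitRel _ _).iseqv.refl θ, (MulAction.orbitRel _ _).iseqv.symm h,
    (MulAction.orbitRel _ _).iseqv.trans h₁ h₂]

theorem conjRel.comp_inv {θ₁ θ₂ : A → ℂ} (h : conjRel A hA θ₁ θ₂) :
    conjRel A hA (θ₁ ∘ Inv.inv) (θ₂ ∘ Inv.inv) := by
  obtain ⟨c, rfl⟩ := (conjRel_iff_orbitRel hA θ₁ θ₂).mp h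
  exact (conjRel_iff_orbitRel hA _ _).mpr ⟨c, (comp_inv_smul c θ₂).symm⟩

theorem comp_inv_eq_self_of_conjRel (hG : Odd (Nat.card G)) {θ : A → ℂ}
    (h : conjRel A hA (θ ∘ Inv.inv) θ) : θ ∘ Inv.inv = θ := by
  obtain ⟨c, hc⟩ := (conjRel_iff_orbitRel hA _ _).mp h
  have hinv : Involutive (· ∘ Inv.inv : (A → ℂ) → A → ℂ) :=
    fun θ => funext fun a => congrArg θ (inv_inv a)
  exact hinv.eq_self_of_smul_eq (hG.of_dvd_nat (orderOf_dvd_natCard c))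
    (fun θ => comp_inv_smul c θ) hc

end ConjAction

theorem even_orbits_of_odd_order (G : Type) [Group G] [Finite G]
    (hodd : Odd (Nat.card G)) (A : Subgroup G) (hA : A.Normal)
    (hab : ∀ x y : A, x * y = y * x)
    (S : Set (A → ℂ)) (hS : S = {θ ∈ Irr A | θ ≠ fun _ => (1 : ℂ)})
    (r : ℕ) (hr : r = Nat.card (Quot (fun θ₁ θ₂ : S => conjRel A hA θ₁.1 θ₂.1))) :
    Even r := by
  have : IsMulCommutative A := .of_comm hab
  have hoddA : Odd (Nat.card A) := hodd.of_dvd_nat (Subgroup.card_subgroup_dvd_card A)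
  have hS_inv : ∀ θ ∈ S, θ ∘ Inv.inv ∈ S := by
    rw [hS]
    rintro θ ⟨hθ, hne⟩
    refine ⟨comp_inv_mem_Irr hθ, fun h => hne (funext fun a => ?_)⟩
    simpa using congrFun h a⁻¹
  subst hr
  refine Involutive.even_natCard_quot (f := fun θ => ⟨θ.1 ∘ Inv.inv, hS_inv θ.1 θ.2⟩)
    ((conjRel_equivalence hA).comap Subtype.val)
    (fun θ => Subtype.ext (funext fun a => congrArg θ.1 (inv_inv a)))
    (fun _ _ h => h.comp_inv) ?_
  rintro ⟨θ, hθS⟩ h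
  rw [hS] at hθS
  exact hθS.2 (eq_one_of_mem_Irr_of_comp_inv_eq hoddA hθS.1 (comp_inv_eq_self_of_conjRel hA hodd h))
end

section
/- Let G = E ⋊ C_r where E is elementary abelian of order q^l for odd primes q, r with the action of C_r on E faithful and irreducible (no proper nonzero invariant subgroup), and suppose q = min{q, r} (i.e., q < r). Then l ≥ 3. -/
theorem three_le_rank_of_faithful_irreducible (G : Type*) [Group G] [Finite G]
    (q r l : ℕ) (hq : q.Prime) (hr : r.Prime) (hq2 : Odd q) (hr2 : Odd r) (hqr : q < r)
    (E R : Subgroup G) (hE : E.Normal) (hcompl : Subgroup.IsComplement' E R)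
    -- E is elementary abelian of order q ^ l
    (hab : ∀ x y : E, x * y = y * x) (hexp : ∀ x : E, x ^ q = 1)
    (hcardE : Nat.card E = q ^ l)
    -- R is cyclic of order r
    (hcyc : IsCyclic R) (hcardR : Nat.card R = r)
    -- the conjugation action of R on E is faithful
    (hfaith : ∀ g ∈ R, (∀ x ∈ E, g * x * g⁻¹ = x) → g = 1)
    -- and irreducible: R stabilizes no nontrivial proper subgroup of E
    (hirr : ∀ S : Subgroup G, S ≤ E → (∀ g ∈ R, ∀ x ∈ S, g * x * g⁻¹ ∈ S) →
      S = ⊥ ∨ S = E) :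
    3 ≤ l := by
  haveI : Fact r.Prime := ⟨hr⟩
  -- there is a nontrivial element of R
  have hRne : ∃ g ∈ R, g ≠ (1 : G) := by
    by_contra h
    push_neg at h
    have hRbot : R = ⊥ := by
      ext x
      simp only [Subgroup.mem_bot]
      exact ⟨fun hx => h x hx, fun hx => hx ▸ R.one_mem⟩
    rw [hRbot, Subgroup.card_bot] at hcardR
    have := hr.one_lt
    omega
  have hr1 : 1 < r := hr.one_lt
  obtain ⟨g₀, hg₀, hg₀ne⟩ := hRne
  -- the subgroup of E centralized by R is trivial
  have hSinv : ∀ g ∈ R, ∀ x ∈ E ⊓ Subgroup.centralizer (R : Set G),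
      g * x * g⁻¹ ∈ E ⊓ Subgroup.centralizer (R : Set G) := by
    intro g hg x hx
    have hc := Subgroup.mem_centralizer_iff.mp hx.2 g hg
    have hcc : g * x * g⁻¹ = x := by rw [hc, mul_inv_cancel_right]
    rw [hcc]
    exact hx
  have hSbot : E ⊓ Subgroup.centralizer (R : Set G) = ⊥ := by
    rcases hirr (E ⊓ Subgroup.centralizer (R : Set G)) inf_le_left hSinv with h | h
    · exact h
    · exfalso
      apply hg₀ne
      apply hfaith g₀ hg₀
      intro x hx
      have hx' : x ∈ E ⊓ Subgroup.centralizer (R : Set G) := h.ge hx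
      have hc := Subgroup.mem_centralizer_iff.mp hx'.2 g₀ hg₀
      rw [hc, mul_inv_cancel_right]
  -- the conjugation action of R on E
  letI : MulAction R E :=
    MulAction.compHom E ((MulAut.conjNormal (H := E)).comp R.subtype)
  have hsmul : ∀ (g : R) (x : E), ((g • x : E) : G) = g * x * (g : G)⁻¹ := by
    intro g x
    rfl
  have hPG : IsPGroup r R := IsPGroup.of_card (n := 1) (by simpa using hcardR)
  have hmod := hPG.card_modEq_card_fixedPoints E
  -- the fixed points are exactly {1}
  have hfix : Nat.card (MulAction.fixedPoints R E) = 1 := by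
    have hset : MulAction.fixedPoints R E = {(1 : E)} := by
      ext x
      simp only [MulAction.mem_fixedPoints, Set.mem_singleton_iff]
      constructor
      · intro hx
        have hxS : (x : G) ∈ E ⊓ Subgroup.centralizer (R : Set G) := by
          refine ⟨x.2, Subgroup.mem_centralizer_iff.mpr ?_⟩
          intro g hg
          have h2 : g * (x : G) * g⁻¹ = x := by
            rw [← hsmul ⟨g, hg⟩ x, hx ⟨g, hg⟩]
          calc g * (x : G) = g * x * g⁻¹ * g := by group
            _ = (x : G) * g := by rw [h2]
        rw [hSbot, Subgroup.mem_bot] at hxS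
        exact Subtype.ext hxS
      · rintro rfl
        intro g
        apply Subtype.ext
        rw [hsmul]
        simp
    rw [hset]
    simp
  rw [hcardE, hfix] at hmod
  -- so r ∣ q ^ l - 1
  have hql1 : 1 ≤ q ^ l := Nat.one_le_pow _ _ hq.pos
  have hdvd : r ∣ q ^ l - 1 := (Nat.modEq_iff_dvd' hql1).mp hmod.symm
  -- now the arithmetic
  by_contra hl
  push_neg at hl
  have hq2le : 2 ≤ q := hq.two_le
  interval_cases l
  · -- l = 0 : E is trivial, contradicting faithfulness
    rw [pow_zero] at hcardE
    have hEbot : E = ⊥ := Subgroup.card_eq_one.mp hcardE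
    apply hg₀ne
    apply hfaith g₀ hg₀
    intro x hx
    rw [hEbot, Subgroup.mem_bot] at hx
    subst hx
    group
  · -- l = 1 : r ∣ q - 1, impossible since q < r
    rw [pow_one] at hdvd
    have := Nat.le_of_dvd (by omega) hdvd
    omega
  · -- l = 2 : r ∣ (q-1)(q+1)
    have heq : q ^ 2 - 1 = (q - 1) * (q + 1) := by
      have h1 : 1 ≤ q := by omega
      have h2 : 1 ≤ q ^ 2 := Nat.one_le_pow _ _ (by omega)
      zify [h1, h2]
      ring
    rw [heq] at hdvd
    rcases (Nat.Prime.dvd_mul hr).mp hdvd with h | h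
    · have := Nat.le_of_dvd (by omega) h
      omega
    · have hle := Nat.le_of_dvd (by omega) h
      obtain ⟨a, ha⟩ := hq2
      obtain ⟨b, hb⟩ := hr2
      omega
end

section
/- For every odd prime p, there exists a positive integer l such that every prime divisor of l is at least p, and 2l + 1 = q^f for some prime q ≥ p and integer f ≥ 2. -/
theorem exists_l_cube_like (p : ℕ) (hp : p.Prime) (hodd : Odd p) :
    ∃ l : ℕ, 0 < l ∧ (∀ s : ℕ, s.Prime → s ∣ l → p ≤ s) ∧
      ∃ (q f : ℕ), q.Prime ∧ p ≤ q ∧ 2 ≤ f ∧ 2 * l + 1 = q ^ f := by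
  classical
  set P : ℕ := ∏ r ∈ Finset.filter Nat.Prime (Finset.range p), r with hP
  set M : ℕ := 2 * P with hM
  have hp3 : 3 ≤ p := by
    have h2 := hp.two_le
    rcases Nat.lt_or_ge p 3 with h' | h'
    · have : p = 2 := by omega
      subst this
      exact absurd hodd (by decide)
    · exact h'
  have h2mem : 2 ∈ Finset.filter Nat.Prime (Finset.range p) := by
    simp [Finset.mem_filter, Nat.prime_two]; omega
  have h2P : 2 ∣ P := Finset.dvd_prod_of_mem _ h2mem
  have h4M : 4 ∣ M := by
    obtain ⟨k, hk⟩ := h2P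
    exact ⟨k, by omega⟩
  have hMpos : 0 < M := by
    have : 0 < P := Finset.prod_pos (fun r hr => (Finset.mem_filter.mp hr).2.pos)
    omega
  haveI : NeZero M := ⟨by omega⟩
  have hunit : IsUnit (-1 : ZMod M) := isUnit_one.neg
  obtain ⟨q, hqgt, hqprime, hqmod⟩ := Nat.forall_exists_prime_gt_and_eq_mod hunit p
  -- M ∣ q + 1
  have hMdvd : M ∣ q + 1 := by
    have : ((q + 1 : ℕ) : ZMod M) = 0 := by push_cast [hqmod]; ring
    exact (ZMod.natCast_eq_zero_iff _ _).mp this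
  have hq4 : q % 4 = 3 := by
    obtain ⟨k, hk⟩ := h4M.trans hMdvd
    have hq3 : 3 ≤ q := by omega
    omega
  -- l
  obtain ⟨k, hk⟩ : ∃ k, q ^ 3 = 4 * k + 3 := by
    have := Nat.pow_mod q 3 4
    rw [hq4] at this
    exact ⟨q ^ 3 / 4, by omega⟩
  refine ⟨(q ^ 3 - 1) / 2, ?_, ?_, q, 3, hqprime, by omega, by norm_num, ?_⟩
  · omega
  · intro s hs hsl
    by_contra hlt
    push_neg at hlt
    have hl2 : (q ^ 3 - 1) / 2 = 2 * k + 1 := by omega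
    rcases eq_or_ne s 2 with rfl | hs2
    · rw [hl2] at hsl; omega
    · have hsmem : s ∈ Finset.filter Nat.Prime (Finset.range p) := by
        simp [Finset.mem_filter, hs]; omega
      have hsM : s ∣ M := (Finset.dvd_prod_of_mem _ hsmem).mul_left 2
      have hsq1 : s ∣ q + 1 := hsM.trans hMdvd
      have hsq3 : s ∣ q ^ 3 + 1 := by
        have hz : (s : ℤ) ∣ (q : ℤ) ^ 3 + 1 := by
          have h1 : (s : ℤ) ∣ (q : ℤ) + 1 := by exact_mod_cast hsq1
          exact Dvd.dvd.trans h1 ⟨(q : ℤ) ^ 2 - q + 1, by ring⟩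
        exact_mod_cast hz
      have hsqm : s ∣ q ^ 3 - 1 := hsl.trans ⟨2, by omega⟩
      have h2' : s ∣ 2 := by
        have := Nat.dvd_sub hsq3 hsqm
        have heq : q ^ 3 + 1 - (q ^ 3 - 1) = 2 := by omega
        rwa [heq] at this
      have := (Nat.prime_dvd_prime_iff_eq hs Nat.prime_two).mp h2'
      exact hs2 this
  · omega
end

section
/- For every odd prime p, there exists a positive integer k such that every prime divisor of k is at least p, and 2k + 1 = q^f for some prime q ≥ p and integer f ≥ 1. -/
theorem exists_k_prime_power (p : ℕ) (hp : p.Prime) (hodd : Odd p) :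
    ∃ k : ℕ, 0 < k ∧ (∀ s : ℕ, s.Prime → s ∣ k → p ≤ s) ∧
      ∃ (q f : ℕ), q.Prime ∧ p ≤ q ∧ 1 ≤ f ∧ 2 * k + 1 = q ^ f := by
  have hp3 : 3 ≤ p := by
    rcases hodd with ⟨t, ht⟩
    have := hp.two_le
    omega
  set m : ℕ := 4 * (p - 1).factorial with hm
  have hmpos : 0 < m := by positivity
  haveI : NeZero m := ⟨hmpos.ne'⟩
  obtain ⟨q, hq_gt, hq_prime, hq_mod⟩ :=
    Nat.forall_exists_prime_gt_and_eq_mod (q := m) (a := (-1 : ZMod m)) isUnit_one.neg p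
  have hdvd : m ∣ q + 1 := by
    have h0 : ((q + 1 : ℕ) : ZMod m) = 0 := by push_cast [hq_mod]; ring
    exact (ZMod.natCast_eq_zero_iff _ _).mp h0
  have h4 : 4 ∣ q + 1 := dvd_trans (Dvd.intro _ rfl) hdvd
  have hq_odd : q % 4 = 3 := by omega
  refine ⟨(q - 1) / 2, by omega, ?_, q, 1, hq_prime, by omega, le_refl 1, by rw [pow_one]; omega⟩
  intro s hs hsk
  by_contra hlt
  push_neg at hlt
  obtain ⟨c, hc⟩ := hsk
  rcases eq_or_ne s 2 with rfl | hs2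
  · omega
  · have hsodd : s % 2 = 1 := Nat.odd_iff.mp (hs.odd_of_ne_two hs2)
    have hsq1 : s ∣ q - 1 := by
      have h2 : q - 1 = 2 * ((q - 1) / 2) := by omega
      exact ⟨2 * c, by rw [h2, hc]; ring⟩
    have hsfac : s ∣ (p - 1).factorial := Nat.dvd_factorial hs.pos (by omega)
    have hsq2 : s ∣ q + 1 := dvd_trans (hsfac.mul_left 4) hdvd
    have hs2' : s ∣ 2 := by
      have := Nat.dvd_sub hsq2 hsq1
      have heq : q + 1 - (q - 1) = 2 := by omega
      rwa [heq] at this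
    have := Nat.le_of_dvd (by norm_num) hs2'
    have := hs.two_le
    omega
end
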